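/- arXiv:math/0510568 — 2 statements merged into one kernel-verified Lean document; each statement's English description precedes it below -/
import Mathlib

section
/- Let d_k (k ≥ 1) denote the decision numbers and let c be the unique positive real number with ∫₀^c (e^x − 1)/x dx = 1. Then k·(1 − d_k) → c as k → ∞. -/
open Real intervalIntegral

noncomputable def gg : ℝ → ℝ := fun t => (Real.exp t - 1) / t

lemma gg_ge_one {t : ℝ} (ht : 0 < t) : 1 ≤ gg t := by
  rw [gg, le_div_iff₀ ht]
  nlinarith [add_one_le_exp t]

lemma gg_nonneg {t : ℝ} (ht : 0 ≤ t) : 0 ≤ gg t := by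
  rcases eq_or_lt_of_le ht with h | h
  · simp [gg, ← h]
  · linarith [gg_ge_one h]

lemma gg_mono : MonotoneOn gg (Set.Ici 0) := by
  intro s hs t ht hst
  simp only [Set.mem_Ici] at hs ht
  rcases eq_or_lt_of_le hs with h | h
  · rw [gg, ← h]; simp; exact gg_nonneg ht
  · rcases eq_or_lt_of_le hst with h2 | h2
    · rw [h2]
    · have htpos : 0 < t := lt_trans h h2
      have ha : (0:ℝ) ≤ 1 - s/t := by
        rw [sub_nonneg, div_le_one htpos]; linarith
      have hb : (0:ℝ) ≤ s/t := by positivity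
      have hab : (1 - s/t) + s/t = 1 := by ring
      have hconv := convexOn_exp.2 (Set.mem_univ (0:ℝ)) (Set.mem_univ t) ha hb hab
      simp only [smul_eq_mul, mul_zero, zero_add, Real.exp_zero, mul_one] at hconv
      -- hconv : exp (s/t * t) ≤ (1 - s/t) + s/t * exp t
      rw [div_mul_cancel₀ _ (ne_of_gt htpos)] at hconv
      have e1 : (1 - s/t + s/t * rexp t) * t = t - s + s * rexp t := by
        field_simp
      have h3 := mul_le_mul_of_nonneg_right hconv (le_of_lt htpos)
      rw [e1] at h3
      rw [gg, gg, div_le_div_iff₀ h htpos]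
      nlinarith

lemma gg_intable {a b : ℝ} (ha : 0 ≤ a) (hb : 0 ≤ b) :
    IntervalIntegrable gg MeasureTheory.volume a b :=
  (gg_mono.mono (by
    intro x hx
    rw [Set.mem_uIcc] at hx
    rcases hx with ⟨h1, _⟩ | ⟨h1, _⟩ <;> simp only [Set.mem_Ici] <;> linarith)).intervalIntegrable

lemma int_ge {a b : ℝ} (ha : 0 ≤ a) (hab : a ≤ b) :
    (b - a) * gg a ≤ ∫ x in a..b, gg x := by
  have h := intervalIntegral.integral_mono_on (f := fun _ => gg a) (g := gg) hab
    intervalIntegrable_const (gg_intable ha (le_trans ha hab))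
    (fun x hx => gg_mono (Set.mem_Ici.2 ha) (Set.mem_Ici.2 (le_trans ha hx.1)) hx.1)
  simpa using h

lemma int_le {a b : ℝ} (ha : 0 ≤ a) (hab : a ≤ b) :
    (∫ x in a..b, gg x) ≤ (b - a) * gg b := by
  have hb : 0 ≤ b := le_trans ha hab
  have h := intervalIntegral.integral_mono_on (f := gg) (g := fun _ => gg b) hab
    (gg_intable ha hb) intervalIntegrable_const
    (fun x hx => gg_mono (Set.mem_Ici.2 (le_trans ha hx.1)) (Set.mem_Ici.2 hb) hx.2)
  simpa using h

lemma int_nonneg {a b : ℝ} (ha : 0 ≤ a) (hab : a ≤ b) :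
    0 ≤ ∫ x in a..b, gg x := by
  have := int_ge ha hab
  nlinarith [gg_nonneg ha]

lemma sum_lower (y : ℝ) (hy : 0 < y) (k : ℕ) :
    (∫ x in (0:ℝ)..(k * y), gg x) ≤ ∑ j ∈ Finset.range k, y * gg ((j+1) * y) := by
  have key : ∑ j ∈ Finset.range k, ∫ x in (j*y : ℝ)..((j+1)*y : ℝ), gg x
      = ∫ x in (0:ℝ)..(k*y), gg x := by
    have := intervalIntegral.sum_integral_adjacent_intervals (a := fun i : ℕ => (i : ℝ) * y)
      (f := gg) (μ := MeasureTheory.volume) (n := k)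
      (fun i _ => gg_intable (by positivity) (by positivity))
    simpa using this
  rw [← key]
  apply Finset.sum_le_sum
  intro j _
  have h1 : ((j:ℝ)) * y ≤ ((j:ℝ)+1) * y := by nlinarith
  have := int_le (a := (j:ℝ)*y) (b := ((j:ℝ)+1)*y) (by positivity) h1
  calc (∫ x in ((j:ℝ)*y)..(((j:ℝ)+1)*y), gg x) ≤ (((j:ℝ)+1)*y - (j:ℝ)*y) * gg (((j:ℝ)+1)*y) := this
    _ = y * gg (((j:ℝ)+1)*y) := by ring_nf

lemma sum_upper (y : ℝ) (hy : 0 < y) (k : ℕ) :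
    ∑ j ∈ Finset.range k, y * gg ((j+1) * y) ≤ ∫ x in (0:ℝ)..((k+1) * y), gg x := by
  have key : ∑ j ∈ Finset.range k, ∫ x in ((j+1)*y : ℝ)..((j+2)*y : ℝ), gg x
      = ∫ x in (y:ℝ)..((k+1)*y), gg x := by
    have := intervalIntegral.sum_integral_adjacent_intervals (a := fun i : ℕ => ((i : ℝ)+1) * y)
      (f := gg) (μ := MeasureTheory.volume) (n := k)
      (fun i _ => gg_intable (by positivity) (by positivity))
    simp only [Nat.cast_add, Nat.cast_one, Nat.cast_zero, zero_add, one_mul] at this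
    convert this using 2 with j
    · ring_nf
  have step : ∑ j ∈ Finset.range k, y * gg ((j+1) * y)
      ≤ ∑ j ∈ Finset.range k, ∫ x in ((j+1)*y : ℝ)..((j+2)*y : ℝ), gg x := by
    apply Finset.sum_le_sum
    intro j _
    have h1 : ((j:ℝ)+1) * y ≤ ((j:ℝ)+2) * y := by nlinarith
    have := int_ge (a := ((j:ℝ)+1)*y) (b := ((j:ℝ)+2)*y) (by positivity) h1
    calc y * gg (((j:ℝ)+1)*y) = (((j:ℝ)+2)*y - ((j:ℝ)+1)*y) * gg (((j:ℝ)+1)*y) := by ring_nf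
      _ ≤ _ := this
  have split : (∫ x in (0:ℝ)..y, gg x) + (∫ x in (y:ℝ)..((k+1)*y), gg x)
      = ∫ x in (0:ℝ)..((k+1)*y), gg x :=
    intervalIntegral.integral_add_adjacent_intervals (gg_intable le_rfl hy.le)
      (gg_intable hy.le (by positivity))
  have h0 : 0 ≤ ∫ x in (0:ℝ)..y, gg x := int_nonneg le_rfl hy.le
  calc ∑ j ∈ Finset.range k, y * gg ((j+1) * y) ≤ _ := step
    _ = ∫ x in (y:ℝ)..((k+1)*y), gg x := key
    _ ≤ _ := by linarith

lemma exp_low {u : ℝ} (hu0 : 0 ≤ u) (hu1 : u < 1) (j : ℕ) :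
    Real.exp (j * u) ≤ (((1 - u) ^ j)⁻¹) := by
  have h1 : (1 - u) ^ j ≤ Real.exp (-(j * u)) := by
    have : 1 - u ≤ Real.exp (-u) := by nlinarith [add_one_le_exp (-u)]
    calc (1 - u) ^ j ≤ (Real.exp (-u)) ^ j := pow_le_pow_left₀ (by linarith) this j
      _ = Real.exp (-(j*u)) := by rw [← Real.exp_nat_mul]; ring_nf
  have hp : 0 < (1 - u) ^ j := pow_pos (by linarith) j
  rw [Real.exp_neg] at h1
  have := inv_anti₀ hp h1
  simpa using this

lemma exp_high {u : ℝ} (hu0 : 0 ≤ u) (hu1 : u ≤ 1/2) (j : ℕ) :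
    (((1 - u) ^ j)⁻¹) ≤ Real.exp (j * (u + 2*u^2)) := by
  have key : Real.exp (-(u + 2*u^2)) ≤ 1 - u := by
    have h1 : 1 ≤ (1 - u) * Real.exp (u + 2*u^2) := by
      have e1 := add_one_le_exp u
      have e2 := add_one_le_exp (2*u^2)
      have : (1 + u) * (1 + 2*u^2) ≤ Real.exp u * Real.exp (2*u^2) := by
        nlinarith [Real.exp_pos u, Real.exp_pos (2*u^2)]
      rw [← Real.exp_add] at this
      have h2 := mul_le_mul_of_nonneg_left this (show (0:ℝ) ≤ 1 - u by linarith)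
      nlinarith [mul_nonneg (sq_nonneg u) (show (0:ℝ) ≤ 1 - 2*u^2 by nlinarith)]
    rw [Real.exp_neg, inv_le_iff_one_le_mul₀ (Real.exp_pos _)]
    linarith [h1]
  have h1 : Real.exp (-(j * (u + 2*u^2))) ≤ (1 - u) ^ j := by
    calc Real.exp (-(j * (u + 2*u^2))) = (Real.exp (-(u + 2*u^2))) ^ j := by
          rw [← Real.exp_nat_mul]; ring_nf
      _ ≤ (1 - u) ^ j := pow_le_pow_left₀ (le_of_lt (Real.exp_pos _)) key j
  have hp : 0 < Real.exp (-(j * (u + 2*u^2))) := Real.exp_pos _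
  rw [Real.exp_neg] at h1 hp
  have := inv_anti₀ hp h1
  simpa using this

lemma F_anti {k : ℕ} (hk : 1 ≤ k) {p q : ℝ} (hp : 0 < p) (hpq : p < q) :
    ∑ j ∈ Finset.Icc 1 k, ((q ^ j)⁻¹ - 1) / (j:ℝ) < ∑ j ∈ Finset.Icc 1 k, ((p ^ j)⁻¹ - 1) / (j:ℝ) := by
  apply Finset.sum_lt_sum_of_nonempty
  · exact ⟨1, Finset.mem_Icc.2 ⟨le_refl 1, hk⟩⟩
  · intro j hj
    have hj1 : 1 ≤ j := (Finset.mem_Icc.1 hj).1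
    have hjr : (0:ℝ) < j := by exact_mod_cast hj1
    have hq : (0:ℝ) < q := lt_trans hp hpq
    have hlt : (q ^ j)⁻¹ < (p ^ j)⁻¹ := by
      apply inv_strictAnti₀ (by positivity)
      exact pow_lt_pow_left₀ hpq hp.le (by omega)
    apply div_lt_div_of_pos_right (by linarith) hjr

lemma icc_shift (k : ℕ) (f : ℕ → ℝ) : ∑ j ∈ Finset.Icc 1 k, f j = ∑ j ∈ Finset.range k, f (j+1) := by
  rw [← Finset.Ico_add_one_right_eq_Icc, Finset.sum_Ico_eq_sum_range]
  simp [add_comm]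

set_option maxHeartbeats 2000000 in
/-- With `d_k` the decision numbers and `c` the unique positive root of
`∫₀^c (e^x − 1)/x dx = 1`, one has `k·(1 − d_k) → c` as `k → ∞`. -/
theorem stmt_4 (d : ℕ → ℝ)
    (hd : ∀ k : ℕ, 1 ≤ k → d k ∈ Set.Ioo (0:ℝ) 1 ∧
      ∑ j ∈ Finset.Icc 1 k, (((d k) ^ j)⁻¹ - 1) / (j : ℝ) = 1)
    (c : ℝ) (hc : 0 < c)
    (hceq : (∫ x in (0:ℝ)..c, (Real.exp x - 1) / x) = 1) :
    Filter.Tendsto (fun k : ℕ => (k : ℝ) * (1 - d k)) Filter.atTop (nhds c) := by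
  have hceq' : (∫ x in (0:ℝ)..c, gg x) = 1 := hceq
  rw [tendsto_order]
  constructor
  · -- lower bound: ∀ a < c, eventually a < k * (1 - d k)
    intro a ha
    rcases le_or_gt a 0 with ha0 | ha0
    · filter_upwards [Filter.eventually_ge_atTop 1] with k hk
      obtain ⟨⟨hd0, hd1⟩, _⟩ := hd k hk
      have hkR : (0:ℝ) < k := by exact_mod_cast hk
      nlinarith [mul_pos hkR (show (0:ℝ) < 1 - d k by linarith)]
    · set a' := (a + c)/2 with ha'def
      have ha'1 : a < a' := by rw [ha'def]; linarith
      have ha'2 : a' < c := by rw [ha'def]; linarith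
      obtain ⟨N, hN⟩ := exists_nat_gt (max (2*a) (2*(a + 4*a^2)/(c - a)))
      filter_upwards [Filter.eventually_ge_atTop (max N 1)] with k hk
      have hk1 : 1 ≤ k := le_trans (le_max_right N 1) hk
      have hkN : (N:ℝ) ≤ k := by exact_mod_cast le_trans (le_max_left N 1) hk
      have hka : 2*a < k := lt_of_le_of_lt (le_max_left _ _) (lt_of_lt_of_le hN hkN)
      have hkb : 2*(a + 4*a^2)/(c - a) < k := lt_of_le_of_lt (le_max_right _ _) (lt_of_lt_of_le hN hkN)
      have hkR : (0:ℝ) < k := by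
        have : (1:ℝ) ≤ k := by exact_mod_cast hk1
        linarith
      have hk1R : (1:ℝ) ≤ k := by exact_mod_cast hk1
      obtain ⟨⟨hd0, hd1⟩, hdsum⟩ := hd k hk1
      set u := a / k with hu_def
      have hu0 : 0 < u := by positivity
      have huk : u * k = a := by rw [hu_def]; field_simp
      have hu12 : u ≤ 1/2 := by
        rw [hu_def, div_le_iff₀ hkR]; linarith
      set y := u + 2*u^2 with hy_def
      have hy0 : 0 < y := by positivity
      -- (k+1) * y ≤ a'
      have hck : 2*(a + 4*a^2) < (c - a)*k := by
        rw [div_lt_iff₀ (by linarith : (0:ℝ) < c - a)] at hkb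
        linarith
      have hky : ((k:ℝ)+1)*y ≤ a' := by
        rw [← mul_le_mul_iff_of_pos_right (show (0:ℝ) < (k:ℝ)^2 by positivity)]
        have eL : ((k:ℝ)+1)*y*(k:ℝ)^2 = ((k:ℝ)+1)*(a*k + 2*a^2) := by
          rw [hy_def, hu_def]; field_simp
        rw [eL]
        have h1 : (2*(a + 4*a^2))*k < ((c - a)*k)*k := by
          exact mul_lt_mul_of_pos_right hck hkR
        have h2 : (0:ℝ) ≤ 2*a^2 * ((k:ℝ) - 1) := by
          apply mul_nonneg (by positivity); linarith
        rw [ha'def]; nlinarith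
      -- sum bound
      have hsum1 : ∑ j ∈ Finset.Icc 1 k, (((1 - u) ^ j)⁻¹ - 1) / (j:ℝ)
          ≤ ∑ j ∈ Finset.Icc 1 k, y * gg (j * y) := by
        apply Finset.sum_le_sum
        intro j hj
        have hj1 : 1 ≤ j := (Finset.mem_Icc.1 hj).1
        have hjR : (0:ℝ) < j := by exact_mod_cast hj1
        have hterm : y * gg ((j:ℝ) * y) = (Real.exp ((j:ℝ)*y) - 1) / j := by
          rw [gg]; field_simp
        rw [hterm]
        have hexp := exp_high hu0.le hu12 j
        rw [← hy_def] at hexp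
        have : ((1 - u) ^ j)⁻¹ - 1 ≤ Real.exp ((j:ℝ) * y) - 1 := by linarith
        gcongr
      have hsum2 : ∑ j ∈ Finset.Icc 1 k, y * gg (j * y)
          ≤ ∫ x in (0:ℝ)..(((k:ℝ)+1) * y), gg x := by
        rw [icc_shift k (fun j => y * gg (j * y))]
        have := sum_upper y hy0 k
        convert this using 2 with j
        · push_cast; ring_nf
      have hky0 : (0:ℝ) ≤ ((k:ℝ)+1)*y := le_of_lt (mul_pos (by positivity) hy0)
      have ha'0 : (0:ℝ) ≤ a' := by linarith
      have hint1 : (∫ x in (0:ℝ)..(((k:ℝ)+1) * y), gg x) ≤ ∫ x in (0:ℝ)..a', gg x := by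
        have hsplit := intervalIntegral.integral_add_adjacent_intervals
          (a := (0:ℝ)) (b := ((k:ℝ)+1)*y) (c := a') (f := gg) (μ := MeasureTheory.volume)
          (gg_intable le_rfl hky0) (gg_intable hky0 ha'0)
        have h0 := int_nonneg (a := ((k:ℝ)+1)*y) (b := a') hky0 hky
        linarith
      have hint2 : (∫ x in (0:ℝ)..a', gg x) ≤ 1 - (c - a') := by
        have hsplit := intervalIntegral.integral_add_adjacent_intervals
          (a := (0:ℝ)) (b := a') (c := c) (f := gg) (μ := MeasureTheory.volume)
          (gg_intable le_rfl ha'0) (gg_intable ha'0 hc.le)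
        have h1 := int_ge (a := a') (b := c) ha'0 ha'2.le
        have h2 : 1 ≤ gg a' := gg_ge_one (by linarith)
        have h3 : (c - a') * 1 ≤ (c - a') * gg a' := by nlinarith
        rw [hceq'] at hsplit
        linarith
      have hFlt : ∑ j ∈ Finset.Icc 1 k, (((1 - u) ^ j)⁻¹ - 1) / (j:ℝ) < 1 := by
        have : (c - a') > 0 := by linarith
        linarith
      -- conclude d k < 1 - u
      have hdlt : d k < 1 - u := by
        by_contra hcon
        push_neg at hcon
        rcases eq_or_lt_of_le hcon with heq | hlt
        · rw [heq] at hFlt; linarith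
        · have := F_anti hk1 (show (0:ℝ) < 1 - u by linarith) hlt
          rw [hdsum] at this
          linarith
      have : a < (k:ℝ) * (1 - d k) := by
        have h1 : u < 1 - d k := by linarith
        calc a = u * k := huk.symm
          _ < (1 - d k) * k := by exact mul_lt_mul_of_pos_right h1 hkR
          _ = (k:ℝ) * (1 - d k) := by ring
      exact this
  · intro b hb
    obtain ⟨N, hN⟩ := exists_nat_gt b
    filter_upwards [Filter.eventually_ge_atTop (max N 1)] with k hk
    have hk1 : 1 ≤ k := le_trans (le_max_right N 1) hk
    have hkN : (N:ℝ) ≤ k := by exact_mod_cast le_trans (le_max_left N 1) hk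
    have hkb : b < (k:ℝ) := lt_of_lt_of_le hN hkN
    have hb0 : 0 < b := lt_trans hc hb
    have hkR : (0:ℝ) < k := lt_trans hb0 hkb
    obtain ⟨⟨hd0, hd1⟩, hdsum⟩ := hd k hk1
    set u := b / (k:ℝ) with hu_def
    have hu0 : 0 < u := by positivity
    have huk : u * k = b := by rw [hu_def]; field_simp
    have hu1 : u < 1 := by rw [hu_def, div_lt_one hkR]; exact hkb
    have hsum1 : ∑ j ∈ Finset.Icc 1 k, u * gg (j * u)
        ≤ ∑ j ∈ Finset.Icc 1 k, (((1 - u) ^ j)⁻¹ - 1) / (j:ℝ) := by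
      apply Finset.sum_le_sum
      intro j hj
      have hj1 : 1 ≤ j := (Finset.mem_Icc.1 hj).1
      have hjR : (0:ℝ) < j := by exact_mod_cast hj1
      have hterm : u * gg ((j:ℝ) * u) = (Real.exp ((j:ℝ)*u) - 1) / j := by
        rw [gg]; field_simp
      rw [hterm]
      have hexp := exp_low hu0.le hu1 j
      have : Real.exp ((j:ℝ) * u) - 1 ≤ ((1 - u) ^ j)⁻¹ - 1 := by linarith
      gcongr
    have hsum2 : (∫ x in (0:ℝ)..((k:ℝ) * u), gg x) ≤ ∑ j ∈ Finset.Icc 1 k, u * gg (j * u) := by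
      rw [icc_shift k (fun j => u * gg (j * u))]
      have := sum_lower u hu0 k
      convert this using 2 with j
      push_cast; ring_nf
    have hint : (1 : ℝ) + (b - c) ≤ ∫ x in (0:ℝ)..b, gg x := by
      have hsplit := intervalIntegral.integral_add_adjacent_intervals
        (a := (0:ℝ)) (b := c) (c := b) (f := gg) (μ := MeasureTheory.volume)
        (gg_intable le_rfl hc.le) (gg_intable hc.le hb0.le)
      have h1 := int_ge (a := c) (b := b) hc.le hb.le
      have h2 : 1 ≤ gg c := gg_ge_one hc
      have h3 : (b - c) * 1 ≤ (b - c) * gg c := mul_le_mul_of_nonneg_left h2 (by linarith)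
      rw [hceq'] at hsplit
      linarith
    have hFgt : 1 < ∑ j ∈ Finset.Icc 1 k, (((1 - u) ^ j)⁻¹ - 1) / (j:ℝ) := by
      have hku : (k:ℝ)*u = b := by rw [mul_comm]; exact huk
      rw [hku] at hsum2
      linarith
    have hdgt : 1 - u < d k := by
      by_contra hcon
      push_neg at hcon
      rcases eq_or_lt_of_le hcon with heq | hlt
      · rw [← heq] at hFgt
        linarith
      · have := F_anti hk1 hd0 hlt
        rw [hdsum] at this
        linarith
    calc (k:ℝ) * (1 - d k) < (k:ℝ) * u := by
          apply mul_lt_mul_of_pos_left (by linarith) hkR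
      _ = b := by rw [mul_comm]; exact huk
end

section
/- Let c be the unique positive real number with ∫₀^c (e^x − 1)/x dx = 1, and let w : (0,1) → ℝ be defined by w(t) = −e^{−c} + (e^{−ct} − e^{−ct/(1−t)})/t + (e^{−ct} − t·e^{−c})/(1−t) + (c/(1−t))·[I(c/(1−t), c) − I(ct/(1−t), ct)], where I(t,s) = ∫_s^t e^{−ξ}/ξ dξ. Then w is Lipschitz on (0,1): there exists a constant L > 0 such that |w(s) − w(t)| ≤ L·|s − t| for all s, t ∈ (0,1); consequently w extends to a continuous function on [0,1]. -/
/-- `I(t,s) = ∫_s^t e^{−ξ}/ξ dξ`. -/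
noncomputable def Ifun (t s : ℝ) : ℝ := ∫ ξ in s..t, Real.exp (-ξ) / ξ

/-- The asymptotic winning rate `w` of the full-information best choice problem. -/
noncomputable def winRate (c t : ℝ) : ℝ :=
  -Real.exp (-c) + (Real.exp (-c * t) - Real.exp (-c * t / (1 - t))) / t
    + (Real.exp (-c * t) - t * Real.exp (-c)) / (1 - t)
    + (c / (1 - t)) * (Ifun (c / (1 - t)) c - Ifun (c * t / (1 - t)) (c * t))

open Real Set MeasureTheory intervalIntegral

set_option maxHeartbeats 1000000

lemma tool_one_sub_exp (x : ℝ) : 1 - Real.exp (-x) ≤ x := by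
  have h := Real.add_one_le_exp (-x)
  linarith

lemma tool_exp_sub_exp {a b : ℝ} (hab : a ≤ b) (ha : 0 ≤ a) :
    Real.exp (-a) - Real.exp (-b) ≤ b - a := by
  have h1 : Real.exp (-a) - Real.exp (-b) = Real.exp (-a) * (1 - Real.exp (-(b - a))) := by
    rw [mul_sub, mul_one, ← Real.exp_add]; ring_nf
  rw [h1]
  have h2 : 1 - Real.exp (-(b - a)) ≤ b - a := tool_one_sub_exp _
  have h3 : Real.exp (-a) ≤ 1 := Real.exp_le_one_iff.2 (by linarith)
  have h4 : 0 ≤ 1 - Real.exp (-(b - a)) := by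
    have := Real.exp_le_one_iff.2 (show -(b-a) ≤ 0 by linarith)
    linarith
  nlinarith [Real.exp_pos (-a)]

lemma tool_exp_sub_exp_nonneg {a b : ℝ} (hab : a ≤ b) :
    0 ≤ Real.exp (-a) - Real.exp (-b) := by
  have := Real.exp_le_exp.2 (neg_le_neg hab)
  linarith

-- exp(-x) ≤ 1 - x + x^2/2 for x ≥ 0
lemma tool_exp_quad {x : ℝ} (hx : 0 ≤ x) : Real.exp (-x) ≤ 1 - x + x^2/2 := by
  have key : ∀ y : ℝ, HasDerivAt (fun z => 1 - z + z^2/2 - Real.exp (-z))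
      (-1 + y + Real.exp (-y)) y := by
    intro y
    have h1 : HasDerivAt (fun z : ℝ => Real.exp (-z)) (Real.exp (-y) * (-1)) y :=
      ((hasDerivAt_id y).neg).exp
    have h2 : HasDerivAt (fun z : ℝ => 1 - z + z^2/2) (-1 + y) y := by
      have : HasDerivAt (fun z : ℝ => 1 - z + z^2/2) (0 - 1 + ((2:ℕ) * y^(2-1))/2) y :=
        (((hasDerivAt_const y (1:ℝ)).sub (hasDerivAt_id y)).add
          (((hasDerivAt_pow 2 y)).div_const 2))
      convert this using 1; norm_num
    refine (h2.sub h1).congr_deriv ?_; ring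
  have mono : Monotone (fun z => 1 - z + z^2/2 - Real.exp (-z)) := by
    apply monotone_of_deriv_nonneg
    · intro y; exact (key y).differentiableAt
    · intro y
      rw [(key y).deriv]
      have := Real.add_one_le_exp (-y)
      linarith
  have := mono hx
  simp only [Real.exp_zero] at this
  norm_num at this
  linarith [this]

-- y^2 * exp(-(a*y)) ≤ 16/a^2 for a > 0, y ≥ 0
lemma tool_sq_decay {a y : ℝ} (ha : 0 < a) (hy : 0 ≤ y) :
    y^2 * Real.exp (-(a*y)) ≤ 16/a^2 := by
  have h1 : a*y/4 ≤ Real.exp (a*y/4) := by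
    have := Real.add_one_le_exp (a*y/4); linarith
  have h2 : y ≤ (4/a) * Real.exp (a*y/4) := by
    rw [div_mul_eq_mul_div, le_div_iff₀ ha]
    calc y * a = 4 * (a*y/4) := by ring
    _ ≤ 4 * Real.exp (a*y/4) := by linarith
  have h3 : y^2 ≤ (16/a^2) * Real.exp (a*y/2) := by
    have e : Real.exp (a*y/4) * Real.exp (a*y/4) = Real.exp (a*y/2) := by
      rw [← Real.exp_add]; ring_nf
    have := mul_le_mul h2 h2 hy (by positivity)
    calc y^2 = y * y := sq y
    _ ≤ (4/a) * Real.exp (a*y/4) * ((4/a) * Real.exp (a*y/4)) := this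
    _ = (16/a^2) * (Real.exp (a*y/4) * Real.exp (a*y/4)) := by ring
    _ = (16/a^2) * Real.exp (a*y/2) := by rw [e]
  calc y^2 * Real.exp (-(a*y)) ≤ (16/a^2) * Real.exp (a*y/2) * Real.exp (-(a*y)) := by
        exact mul_le_mul_of_nonneg_right h3 (Real.exp_pos _).le
  _ = (16/a^2) * Real.exp (a*y/2 - a*y) := by rw [mul_assoc, ← Real.exp_add]; ring_nf
  _ ≤ (16/a^2) * 1 := by
        apply mul_le_mul_of_nonneg_left _ (by positivity)
        exact Real.exp_le_one_iff.2 (by nlinarith)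
  _ = 16/a^2 := mul_one _

-- |a e^{-a x} - b e^{-b x}| ≤ b - a  for 0 ≤ a ≤ b, 0 ≤ x ≤ 1
lemma tool_lip {x a b : ℝ} (hx : 0 ≤ x) (hx1 : x ≤ 1) (ha : 0 ≤ a) (hab : a ≤ b) :
    |a * Real.exp (-(a*x)) - b * Real.exp (-(b*x))| ≤ b - a := by
  set s : Set ℝ := Icc a b with hs
  have hder : ∀ y ∈ s, HasDerivWithinAt (fun z => z * Real.exp (-(z*x)))
      ((1 - y*x) * Real.exp (-(y*x))) s y := by
    intro y _
    have h1 : HasDerivAt (fun z : ℝ => z * x) x y := by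
      simpa using (hasDerivAt_id y).mul_const x
    have h2 : HasDerivAt (fun z : ℝ => Real.exp (-(z*x))) (Real.exp (-(y*x)) * (-x)) y :=
      (h1.neg).exp
    have h3 : HasDerivAt (fun z : ℝ => z * Real.exp (-(z*x)))
        (1 * Real.exp (-(y*x)) + y * (Real.exp (-(y*x)) * (-x))) y :=
      (hasDerivAt_id y).mul h2
    have : HasDerivAt (fun z : ℝ => z * Real.exp (-(z*x)))
        ((1 - y*x) * Real.exp (-(y*x))) y := by
      convert h3 using 1; ring
    exact this.hasDerivWithinAt
  have hbound : ∀ y ∈ s, ‖(1 - y*x) * Real.exp (-(y*x))‖ ≤ 1 := by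
    intro y hy
    have hy0 : 0 ≤ y := le_trans ha hy.1
    have hyx : 0 ≤ y * x := mul_nonneg hy0 hx
    rw [norm_mul, Real.norm_eq_abs, Real.norm_eq_abs, abs_of_pos (Real.exp_pos _)]
    rcases le_total (y*x) 1 with h | h
    · have : |1 - y*x| ≤ 1 := by rw [abs_of_nonneg (by linarith)]; linarith
      have he : Real.exp (-(y*x)) ≤ 1 := Real.exp_le_one_iff.2 (by linarith)
      nlinarith [abs_nonneg (1 - y*x), Real.exp_pos (-(y*x))]
    · have h1 : |1 - y*x| = y*x - 1 := by rw [abs_of_nonpos (by linarith)]; ring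
      have h2 : y*x ≤ Real.exp (y*x) := by have := Real.add_one_le_exp (y*x); linarith
      have h3 : (y*x - 1) * Real.exp (-(y*x)) ≤ 1 := by
        rw [Real.exp_neg]
        rw [mul_inv_le_iff₀ (Real.exp_pos _)]
        nlinarith
      rw [h1]; exact h3
  have := Convex.norm_image_sub_le_of_norm_hasDerivWithin_le hder hbound (convex_Icc a b)
    (left_mem_Icc.2 hab) (right_mem_Icc.2 hab)
  rw [Real.norm_eq_abs, Real.norm_eq_abs] at this
  calc |a * Real.exp (-(a*x)) - b * Real.exp (-(b*x))|
      = |b * Real.exp (-(b*x)) - a * Real.exp (-(a*x))| := abs_sub_comm _ _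
  _ ≤ 1 * |b - a| := this
  _ = b - a := by rw [one_mul, abs_of_nonneg (by linarith)]

-- continuity of f at positive points
lemma tool_contAt {x : ℝ} (hx : x ≠ 0) :
    ContinuousAt (fun ξ => Real.exp (-ξ) / ξ) x :=
  (Real.continuous_exp.comp continuous_neg).continuousAt.div continuousAt_id hx

lemma tool_intable {p q : ℝ} (hp : 0 < p) (hq : 0 < q) :
    IntervalIntegrable (fun ξ => Real.exp (-ξ) / ξ) volume p q := by
  apply ContinuousOn.intervalIntegrable
  intro x hx
  have hx0 : 0 < x := by
    rcases le_total p q with h | h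
    · rw [uIcc_of_le h] at hx; exact lt_of_lt_of_le hp hx.1
    · rw [uIcc_of_ge h] at hx; exact lt_of_lt_of_le hq hx.1
  exact (tool_contAt hx0.ne').continuousWithinAt


lemma tool_intable2 {a t u : ℝ} (ht : 0 < t) (hu : 0 < u) :
    IntervalIntegrable (fun x => Real.exp (-(a*x))/x) volume t u := by
  apply ContinuousOn.intervalIntegrable
  intro x hx
  have hx0 : 0 < x := by
    rcases le_total t u with h | h
    · rw [uIcc_of_le h] at hx; exact lt_of_lt_of_le ht hx.1
    · rw [uIcc_of_ge h] at hx; exact lt_of_lt_of_le hu hx.1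
  exact (((Real.continuous_exp.comp (continuous_const.mul continuous_id).neg).continuousAt).div
    continuousAt_id hx0.ne').continuousWithinAt

lemma tool_subst {a t : ℝ} (ha : 0 < a) :
    ∫ x in t..1, Real.exp (-(a*x))/x = Ifun a (a*t) := by
  have hfun : ∀ x : ℝ, Real.exp (-(a*x))/x = a * (Real.exp (-(a*x))/(a*x)) := by
    intro x
    by_cases hx : x = 0
    · simp [hx]
    · rw [mul_div_assoc']; rw [mul_div_mul_left _ _ ha.ne']
  have h1 : (∫ x in t..1, Real.exp (-(a*x))/x)
      = ∫ x in t..1, a * (Real.exp (-(a*x))/(a*x)) := by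
    congr 1; funext x; exact hfun x
  rw [h1]
  rw [intervalIntegral.integral_const_mul]
  have h2 : (a : ℝ) • (∫ x in t..1, (fun ξ => Real.exp (-ξ)/ξ) (a * x))
      = ∫ x in a*t..a*1, (fun ξ => Real.exp (-ξ)/ξ) x := intervalIntegral.smul_integral_comp_mul_left (fun ξ => Real.exp (-ξ)/ξ) a
  simp only [smul_eq_mul] at h2
  have h3 : (∫ x in t..1, (fun ξ => Real.exp (-ξ)/ξ) (a * x))
      = ∫ x in t..1, Real.exp (-(a*x))/(a*x) := rfl
  rw [h3] at h2
  rw [h2, Ifun]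
  norm_num

lemma tool_D_repr {c t : ℝ} (hc : 0 < c) (ht : t ∈ Set.Ioo (0:ℝ) 1) :
    Ifun (c/(1-t)) c - Ifun (c*t/(1-t)) (c*t)
      = ∫ x in t..1, (Real.exp (-(c/(1-t)*x)) - Real.exp (-(c*x)))/x := by
  obtain ⟨ht0, ht1⟩ := ht
  have hu : 0 < 1 - t := by linarith
  set V := c/(1-t) with hV
  have hV0 : 0 < V := div_pos hc hu
  have hbV : c*t/(1-t) = V*t := by rw [hV]; ring
  have hsub : (∫ x in t..1, (Real.exp (-(V*x)) - Real.exp (-(c*x)))/x)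
      = (∫ x in t..1, Real.exp (-(V*x))/x) - ∫ x in t..1, Real.exp (-(c*x))/x := by
    rw [← intervalIntegral.integral_sub (tool_intable2 ht0 one_pos) (tool_intable2 ht0 one_pos)]
    congr 1; funext x; rw [sub_div]
  rw [hsub, tool_subst hV0, tool_subst hc, hbV]
  -- additivity
  have hVt : 0 < V*t := mul_pos hV0 ht0
  have hct : 0 < c*t := mul_pos hc ht0
  have h1 := intervalIntegral.integral_add_adjacent_intervals
    (tool_intable hct hVt) (tool_intable hVt hV0)
  have h2 := intervalIntegral.integral_add_adjacent_intervals
    (tool_intable hct hc) (tool_intable hc hV0)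
  simp only [Ifun]
  rw [← h1] at h2
  linarith [h2]

noncomputable def Dval (c t : ℝ) : ℝ := Ifun (c/(1-t)) c - Ifun (c*t/(1-t)) (c*t)

noncomputable def Aderiv (c t : ℝ) : ℝ :=
  ((-(c * Real.exp (-(c*t))) + (c/(1-t)^2) * Real.exp (-(c*t/(1-t)))) * t
    - (Real.exp (-(c*t)) - Real.exp (-(c*t/(1-t))))) / t^2

noncomputable def Bderiv (c t : ℝ) : ℝ :=
  ((-(c * Real.exp (-(c*t))) - Real.exp (-c)) * (1-t)
    + (Real.exp (-(c*t)) - t * Real.exp (-c))) / (1-t)^2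

noncomputable def Dderiv (c t : ℝ) : ℝ :=
  Real.exp (-(c/(1-t)))/(1-t) - Real.exp (-(c*t/(1-t)))/(t*(1-t)) + Real.exp (-(c*t))/t

noncomputable def Cderiv (c t : ℝ) : ℝ :=
  (c/(1-t)^2) * Dval c t + (c/(1-t)) * Dderiv c t

noncomputable def Wderiv (c t : ℝ) : ℝ := Aderiv c t + Bderiv c t + Cderiv c t

lemma winRate_eq (c t : ℝ) : winRate c t =
    -Real.exp (-c) + (Real.exp (-(c*t)) - Real.exp (-(c*t/(1-t))))/t
      + (Real.exp (-(c*t)) - t * Real.exp (-c))/(1-t)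
      + (c/(1-t)) * Dval c t := by
  simp only [winRate, Dval, neg_mul, neg_div]

lemma hasDerivAt_inner {c : ℝ} {t₀ : ℝ} (h1 : 1 - t₀ ≠ 0) :
    HasDerivAt (fun t => c*t/(1-t)) (c/(1-t₀)^2) t₀ := by
  have hct : HasDerivAt (fun t : ℝ => c*t) c t₀ := by
    simpa using (hasDerivAt_id t₀).const_mul c
  have hden : HasDerivAt (fun t : ℝ => 1 - t) (0 - 1) t₀ :=
    (hasDerivAt_const t₀ (1:ℝ)).sub (hasDerivAt_id t₀)
  have := hct.div hden h1
  refine this.congr_deriv ?_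
  field_simp
  ring

lemma hasDerivAt_V {c : ℝ} {t₀ : ℝ} (h1 : 1 - t₀ ≠ 0) :
    HasDerivAt (fun t => c/(1-t)) (c/(1-t₀)^2) t₀ := by
  have hden : HasDerivAt (fun t : ℝ => 1 - t) (0 - 1) t₀ :=
    (hasDerivAt_const t₀ (1:ℝ)).sub (hasDerivAt_id t₀)
  have := (hasDerivAt_const t₀ c).div hden h1
  refine this.congr_deriv ?_
  field_simp; ring

lemma hasDerivAt_E1 {c : ℝ} (t₀ : ℝ) :
    HasDerivAt (fun t => Real.exp (-(c*t))) (Real.exp (-(c*t₀)) * -c) t₀ := by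
  have hct : HasDerivAt (fun t : ℝ => c*t) c t₀ := by
    simpa using (hasDerivAt_id t₀).const_mul c
  exact hct.neg.exp

lemma hasDerivAt_Eb {c : ℝ} {t₀ : ℝ} (h1 : 1 - t₀ ≠ 0) :
    HasDerivAt (fun t => Real.exp (-(c*t/(1-t))))
      (Real.exp (-(c*t₀/(1-t₀))) * -(c/(1-t₀)^2)) t₀ :=
  ((hasDerivAt_inner h1).neg).exp

lemma hasDerivAt_A {c : ℝ} {t₀ : ℝ} (ht0 : t₀ ≠ 0) (h1 : 1 - t₀ ≠ 0) :
    HasDerivAt (fun t => (Real.exp (-(c*t)) - Real.exp (-(c*t/(1-t))))/t)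
      (Aderiv c t₀) t₀ := by
  have := ((hasDerivAt_E1 (c := c) t₀).sub (hasDerivAt_Eb (c := c) h1)).div
    (hasDerivAt_id t₀) ht0
  refine this.congr_deriv ?_
  simp only [Aderiv, id_eq, Pi.sub_apply]
  ring

lemma hasDerivAt_B {c : ℝ} {t₀ : ℝ} (h1 : 1 - t₀ ≠ 0) :
    HasDerivAt (fun t => (Real.exp (-(c*t)) - t * Real.exp (-c))/(1-t))
      (Bderiv c t₀) t₀ := by
  have hnum : HasDerivAt (fun t => Real.exp (-(c*t)) - t * Real.exp (-c))
      (Real.exp (-(c*t₀)) * -c - 1 * Real.exp (-c)) t₀ :=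
    (hasDerivAt_E1 t₀).sub ((hasDerivAt_id t₀).mul_const _)
  have hden : HasDerivAt (fun t : ℝ => 1 - t) (0 - 1) t₀ :=
    (hasDerivAt_const t₀ (1:ℝ)).sub (hasDerivAt_id t₀)
  have := hnum.div hden h1
  refine this.congr_deriv ?_
  simp only [Bderiv]
  ring

lemma tool_meas (x : ℝ) : StronglyMeasurableAtFilter (fun ξ : ℝ => Real.exp (-ξ)/ξ) (nhds x) := by
  have hm : Measurable (fun ξ : ℝ => Real.exp (-ξ)/ξ) :=
    (Real.measurable_exp.comp measurable_neg).div measurable_id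
  exact hm.stronglyMeasurable.stronglyMeasurableAtFilter

-- derivative of u ↦ ∫_{a₀}^u f at positive point
lemma hasDerivAt_G {a₀ p : ℝ} (ha : 0 < a₀) (hp : 0 < p) :
    HasDerivAt (fun u => ∫ ξ in a₀..u, Real.exp (-ξ)/ξ) (Real.exp (-p)/p) p :=
  intervalIntegral.integral_hasDerivAt_right (tool_intable ha hp) (tool_meas p)
    (tool_contAt hp.ne')

lemma hasDerivAt_Dval {c : ℝ} (hc : 0 < c) {t₀ : ℝ} (ht : t₀ ∈ Set.Ioo (0:ℝ) 1) :
    HasDerivAt (fun t => Dval c t)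
      ((Real.exp (-(c/(1-t₀)))/(c/(1-t₀))) * (c/(1-t₀)^2)
        - ((Real.exp (-(c*t₀/(1-t₀)))/(c*t₀/(1-t₀))) * (c/(1-t₀)^2)
            - (Real.exp (-(c*t₀))/(c*t₀)) * c)) t₀ := by
  obtain ⟨ht0, ht1⟩ := ht
  have hu : 0 < 1 - t₀ := by linarith
  have hV0 : 0 < c/(1-t₀) := div_pos hc hu
  have hb0 : 0 < c*t₀/(1-t₀) := div_pos (mul_pos hc ht0) hu
  have hct0 : 0 < c*t₀ := mul_pos hc ht0
  -- part 1 : t ↦ Ifun (c/(1-t)) c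
  have hpart1 : HasDerivAt (fun t => Ifun (c/(1-t)) c)
      ((Real.exp (-(c/(1-t₀)))/(c/(1-t₀))) * (c/(1-t₀)^2)) t₀ := by
    have hG : HasDerivAt (fun u => ∫ ξ in c..u, Real.exp (-ξ)/ξ)
        (Real.exp (-(c/(1-t₀)))/(c/(1-t₀))) (c/(1-t₀)) := hasDerivAt_G hc hV0
    exact HasDerivAt.comp t₀ hG (hasDerivAt_V hu.ne')
  -- part 2 : t ↦ Ifun (c*t/(1-t)) (c*t)
  set a₀ := c*t₀/2 with ha₀
  have ha₀0 : 0 < a₀ := by positivity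
  have hG2 : ∀ p : ℝ, 0 < p → HasDerivAt (fun u => ∫ ξ in a₀..u, Real.exp (-ξ)/ξ)
      (Real.exp (-p)/p) p := fun p hp => hasDerivAt_G ha₀0 hp
  have hcomp1 : HasDerivAt (fun t => ∫ ξ in a₀..(c*t/(1-t)), Real.exp (-ξ)/ξ)
      ((Real.exp (-(c*t₀/(1-t₀)))/(c*t₀/(1-t₀))) * (c/(1-t₀)^2)) t₀ :=
    HasDerivAt.comp t₀ (hG2 _ hb0) (hasDerivAt_inner hu.ne')
  have hct' : HasDerivAt (fun t : ℝ => c*t) c t₀ := by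
    simpa using (hasDerivAt_id t₀).const_mul c
  have hcomp2 : HasDerivAt (fun t => ∫ ξ in a₀..(c*t), Real.exp (-ξ)/ξ)
      ((Real.exp (-(c*t₀))/(c*t₀)) * c) t₀ :=
    HasDerivAt.comp t₀ (hG2 _ hct0) hct'
  have hloc : (fun t => Ifun (c*t/(1-t)) (c*t)) =ᶠ[nhds t₀]
      (fun t => (∫ ξ in a₀..(c*t/(1-t)), Real.exp (-ξ)/ξ)
        - ∫ ξ in a₀..(c*t), Real.exp (-ξ)/ξ) := by
    have hmem : Set.Ioo (0:ℝ) 1 ∈ nhds t₀ := isOpen_Ioo.mem_nhds ⟨ht0, ht1⟩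
    filter_upwards [hmem] with t ht'
    obtain ⟨h0', h1'⟩ := ht'
    have hu' : 0 < 1 - t := by linarith
    have h1 : 0 < c*t/(1-t) := div_pos (mul_pos hc h0') hu'
    have h2 : 0 < c*t := mul_pos hc h0'
    rw [Ifun]
    rw [intervalIntegral.integral_interval_sub_left (tool_intable ha₀0 h1)
      (tool_intable ha₀0 h2)]
  have hpart2 : HasDerivAt (fun t => Ifun (c*t/(1-t)) (c*t))
      ((Real.exp (-(c*t₀/(1-t₀)))/(c*t₀/(1-t₀))) * (c/(1-t₀)^2)
        - (Real.exp (-(c*t₀))/(c*t₀)) * c) t₀ :=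
    (hcomp1.sub hcomp2).congr_of_eventuallyEq hloc
  exact hpart1.sub hpart2

lemma hasDerivAt_winRate {c : ℝ} (hc : 0 < c) {t₀ : ℝ} (ht : t₀ ∈ Set.Ioo (0:ℝ) 1) :
    HasDerivAt (winRate c) (Wderiv c t₀) t₀ := by
  obtain ⟨ht0, ht1⟩ := ht
  have hu : 0 < 1 - t₀ := by linarith
  have hwr : winRate c = fun t =>
      -Real.exp (-c) + (Real.exp (-(c*t)) - Real.exp (-(c*t/(1-t))))/t
        + (Real.exp (-(c*t)) - t * Real.exp (-c))/(1-t)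
        + (c/(1-t)) * Dval c t := by
    funext t; exact winRate_eq c t
  rw [hwr]
  have hC : HasDerivAt (fun t => (c/(1-t)) * Dval c t) (Cderiv c t₀) t₀ := by
    have := (hasDerivAt_V (c := c) hu.ne').mul (hasDerivAt_Dval hc ⟨ht0, ht1⟩)
    refine this.congr_deriv ?_
    simp only [Cderiv, Dderiv]
    have h1 : Real.exp (-(c/(1-t₀)))/(c/(1-t₀)) * (c/(1-t₀)^2)
        = Real.exp (-(c/(1-t₀)))/(1-t₀) := by
      field_simp
    have h2 : Real.exp (-(c*t₀/(1-t₀)))/(c*t₀/(1-t₀)) * (c/(1-t₀)^2)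
        = Real.exp (-(c*t₀/(1-t₀)))/(t₀*(1-t₀)) := by
      field_simp
    have h3 : Real.exp (-(c*t₀))/(c*t₀) * c = Real.exp (-(c*t₀))/t₀ := by
      rw [div_mul_eq_mul_div, div_eq_div_iff (by positivity) (by positivity)]
      ring
    rw [h1, h2, h3]
    ring
  have := (((hasDerivAt_const t₀ (-Real.exp (-c))).add
    (hasDerivAt_A (c := c) ht0.ne' hu.ne')).add (hasDerivAt_B (c := c) hu.ne')).add hC
  refine this.congr_deriv ?_
  simp only [Wderiv]
  ring

lemma boundB {c t : ℝ} (hc : 0 < c) (ht : t ∈ Set.Ioo (0:ℝ) 1) :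
    |Bderiv c t| ≤ c^2/2 := by
  obtain ⟨ht0, ht1⟩ := ht
  have hu : 0 < 1 - t := by linarith
  set u := 1 - t with hudef
  set X := Real.exp (c*u) with hX
  have hX1 : 1 ≤ X := Real.one_le_exp (by positivity)
  have hE1 : Real.exp (-(c*t)) = Real.exp (-c) * X := by
    rw [hX, ← Real.exp_add]; congr 1; rw [hudef]; ring
  have hN : (-(c * Real.exp (-(c*t))) - Real.exp (-c)) * (1-t)
      + (Real.exp (-(c*t)) - t * Real.exp (-c))
      = Real.exp (-c) * (X * (1 - c*u) - 1) := by
    rw [hE1, ← hudef]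
    have htu : t = 1 - u := by rw [hudef]; ring
    rw [htu]; ring
  -- |X*(1-c*u) - 1| ≤ (c*u)^2 * X / 2
  have hx0 : 0 ≤ c*u := by positivity
  have hlow : X * (1 - c*u) ≤ 1 := by
    have h := Real.add_one_le_exp (-(c*u))
    have hXinv : Real.exp (-(c*u)) = X⁻¹ := by rw [hX, ← Real.exp_neg]
    rw [hXinv] at h
    have hXpos : 0 < X := Real.exp_pos _
    calc X * (1 - c*u) ≤ X * X⁻¹ := by
          apply mul_le_mul_of_nonneg_left _ hXpos.le
          linarith
    _ = 1 := mul_inv_cancel₀ hXpos.ne'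
  have hhigh : 1 - X * (1 - c*u) ≤ (c*u)^2 * X / 2 := by
    have h := tool_exp_quad hx0
    have hXinv : Real.exp (-(c*u)) = X⁻¹ := by rw [hX, ← Real.exp_neg]
    rw [hXinv] at h
    have hXpos : 0 < X := Real.exp_pos _
    -- X⁻¹ ≤ 1 - c*u + (c*u)^2/2 ; multiply by X
    nlinarith [mul_le_mul_of_nonneg_left h hXpos.le, mul_inv_cancel₀ hXpos.ne']
  have habs : |X * (1 - c*u) - 1| ≤ (c*u)^2 * X / 2 := by
    rw [abs_le]; constructor <;> nlinarith
  have hEc : Real.exp (-c) * X = Real.exp (-(c*t)) := hE1.symm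
  have hEct1 : Real.exp (-(c*t)) ≤ 1 := Real.exp_le_one_iff.2 (by nlinarith)
  have hu1 : u ≤ 1 := by rw [hudef]; linarith
  have key : |Real.exp (-c) * (X * (1 - c*u) - 1)| ≤ c^2 * u^2 / 2 := by
    rw [abs_mul, abs_of_pos (Real.exp_pos _)]
    calc Real.exp (-c) * |X * (1 - c*u) - 1| ≤ Real.exp (-c) * ((c*u)^2 * X / 2) := by
          apply mul_le_mul_of_nonneg_left habs (Real.exp_pos _).le
    _ = (c*u)^2 / 2 * (Real.exp (-c) * X) := by ring
    _ = (c*u)^2 / 2 * Real.exp (-(c*t)) := by rw [hEc]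
    _ ≤ (c*u)^2 / 2 * 1 := by
          apply mul_le_mul_of_nonneg_left hEct1 (by positivity)
    _ = c^2 * u^2/2 := by ring
  rw [Bderiv, abs_div, hN, abs_of_pos (by positivity : (0:ℝ) < (1-t)^2)]
  rw [div_le_iff₀ (by positivity : (0:ℝ) < (1-t)^2)]
  calc |Real.exp (-c) * (X * (1 - c*u) - 1)| ≤ c^2 * u^2/2 := key
  _ = c^2/2 * (1-t)^2 := by rw [hudef]; ring

lemma boundA {c t : ℝ} (hc : 0 < c) (ht : t ∈ Set.Ioo (0:ℝ) 1) :
    |Aderiv c t| ≤ 4*c^2 + 12*c + 256/c + 8 := by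
  obtain ⟨ht0, ht1⟩ := ht
  have hu : 0 < 1 - t := by linarith
  set E1 := Real.exp (-(c*t)) with hE1def
  set Eb := Real.exp (-(c*t/(1-t))) with hEbdef
  have hE1pos : 0 < E1 := Real.exp_pos _
  have hEbpos : 0 < Eb := Real.exp_pos _
  have hE1le : E1 ≤ 1 := Real.exp_le_one_iff.2 (by nlinarith)
  have hble : c*t ≤ c*t/(1-t) := by
    rw [le_div_iff₀ hu]
    nlinarith [mul_nonneg (mul_nonneg hc.le ht0.le) ht0.le]
  have hEble : Eb ≤ E1 := Real.exp_le_exp.2 (by linarith)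
  have hEb1 : Eb ≤ 1 := le_trans hEble hE1le
  have hdiff0 : 0 ≤ E1 - Eb := by linarith
  have hdiffle : E1 - Eb ≤ c*t/(1-t) - c*t := tool_exp_sub_exp hble (by positivity)
  have hgap : c*t/(1-t) - c*t = c*t^2/(1-t) := by field_simp; ring
  -- |Aderiv| = |num1 * t - num2| / t^2 with num1, num2
  rw [Aderiv, abs_div, abs_of_pos (by positivity : (0:ℝ) < t^2),
    div_le_iff₀ (by positivity : (0:ℝ) < t^2)]
  set num1 := -(c * E1) + (c/(1-t)^2) * Eb with hnum1
  set num2 := E1 - Eb with hnum2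
  rcases le_total t (1/2) with hhalf | hhalf
  · -- t ≤ 1/2 : 1 - t ≥ 1/2
    have hu2 : (1:ℝ)/2 ≤ 1 - t := by linarith
    have hgap2 : E1 - Eb ≤ 2*c*t^2 := by
      rw [hgap] at hdiffle
      calc E1 - Eb ≤ c*t^2/(1-t) := hdiffle
      _ ≤ c*t^2/(1/2) := by
          apply div_le_div_of_nonneg_left (by positivity) (by norm_num) hu2
      _ = 2*c*t^2 := by ring
    have hnum1bd : |num1| ≤ (4*c^2 + 8*c) * t := by
      have expand : num1 = c * ((Eb - E1)/(1-t)^2 + E1 * (1/(1-t)^2 - 1)) := by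
        rw [hnum1]; field_simp; ring
      rw [expand, abs_mul, abs_of_pos hc]
      have h1 : |(Eb - E1)/(1-t)^2| ≤ 8*c*t^2 := by
        rw [abs_div, abs_of_pos (by positivity : (0:ℝ) < (1-t)^2)]
        rw [div_le_iff₀ (by positivity : (0:ℝ) < (1-t)^2)]
        rw [abs_sub_comm, abs_of_nonneg hdiff0]
        have hq : (1:ℝ)/4 ≤ (1-t)^2 := by nlinarith
        nlinarith [hgap2, hq, mul_nonneg (mul_nonneg hc.le (sq_nonneg t)) (sq_nonneg (1-t))]
      have h2 : |E1 * (1/(1-t)^2 - 1)| ≤ 8*t := by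
        have hpos : 0 ≤ 1/(1-t)^2 - 1 := by
          rw [sub_nonneg, le_div_iff₀ (by positivity : (0:ℝ) < (1-t)^2)]
          nlinarith
        rw [abs_mul, abs_of_pos hE1pos, abs_of_nonneg hpos]
        have : 1/(1-t)^2 - 1 = (2*t - t^2)/(1-t)^2 := by field_simp; ring
        rw [this]
        have hq : (2*t - t^2)/(1-t)^2 ≤ (2*t - t^2)/(1/4) := by
          apply div_le_div_of_nonneg_left (by nlinarith) (by norm_num) (by nlinarith)
        calc E1 * ((2*t - t^2)/(1-t)^2) ≤ 1 * ((2*t-t^2)/(1/4)) := by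
              apply mul_le_mul hE1le hq (div_nonneg (by nlinarith) (by positivity)) (by norm_num)
        _ = 8*t - 4*t^2 := by ring
        _ ≤ 8*t := by nlinarith
      calc c * |(Eb - E1)/(1-t)^2 + E1 * (1/(1-t)^2 - 1)|
          ≤ c * (|(Eb - E1)/(1-t)^2| + |E1 * (1/(1-t)^2 - 1)|) := by
            apply mul_le_mul_of_nonneg_left (abs_add_le _ _) hc.le
      _ ≤ c * (8*c*t^2 + 8*t) := by
            apply mul_le_mul_of_nonneg_left (by linarith) hc.le
      _ ≤ c * (4*c*t + 8*t) := by
            apply mul_le_mul_of_nonneg_left _ hc.le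
            nlinarith
      _ = (4*c^2 + 8*c) * t := by ring
    calc |num1 * t - num2| ≤ |num1| * t + |num2| := by
          have h := abs_sub (num1 * t) num2
          rw [abs_mul, abs_of_pos ht0] at h
          exact h
    _ ≤ (4*c^2 + 8*c)*t*t + 2*c*t^2 := by
          have : |num2| ≤ 2*c*t^2 := by
            rw [hnum2, abs_of_nonneg hdiff0]; exact hgap2
          nlinarith [abs_nonneg num1, hnum1bd]
    _ = (4*c^2 + 8*c + 2*c) * t^2 := by ring
    _ ≤ (4*c^2 + 12*c + 256/c + 8) * t^2 := by
          have : 0 < 256/c := by positivity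
          nlinarith
  · -- t ≥ 1/2
    have hy : (1:ℝ) ≤ 1/(1-t) := by
      rw [le_div_iff₀ hu]; linarith
    have hEbu : Eb/(1-t)^2 ≤ 64/c^2 := by
      -- Eb = exp(-(c*t/(1-t))) ≤ exp(-((c/2)*(1/(1-t))))
      have harg : (c/2)*(1/(1-t)) ≤ c*t/(1-t) := by
        rw [mul_one_div]
        exact (div_le_div_iff_of_pos_right hu).2 (by nlinarith)
      have hEb2 : Eb ≤ Real.exp (-((c/2)*(1/(1-t)))) := by
        rw [hEbdef]; exact Real.exp_le_exp.2 (by linarith)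
      have hsq := tool_sq_decay (a := c/2) (y := 1/(1-t)) (by positivity) (by positivity)
      have h16 : 16/(c/2)^2 = 64/c^2 := by field_simp; ring
      have hform : Eb/(1-t)^2 = Eb * (1/(1-t))^2 := by field_simp
      rw [hform]
      calc Eb * (1/(1-t))^2 ≤ Real.exp (-((c/2)*(1/(1-t)))) * (1/(1-t))^2 := by
            apply mul_le_mul_of_nonneg_right hEb2 (by positivity)
      _ = (1/(1-t))^2 * Real.exp (-((c/2)*(1/(1-t)))) := by ring
      _ ≤ 16/(c/2)^2 := hsq
      _ = 64/c^2 := h16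
    have hnum1bd : |num1| ≤ c + 64/c := by
      rw [hnum1]
      have h1 : |(-(c * E1))| = c * E1 := by
        rw [abs_neg, abs_mul, abs_of_pos hc, abs_of_pos hE1pos]
      have h2 : (c/(1-t)^2) * Eb ≤ 64/c := by
        have : (c/(1-t)^2) * Eb = c * (Eb/(1-t)^2) := by ring
        rw [this]
        calc c * (Eb/(1-t)^2) ≤ c * (64/c^2) := mul_le_mul_of_nonneg_left hEbu hc.le
        _ = 64/c := by field_simp
      calc |(-(c * E1)) + (c/(1-t)^2) * Eb| ≤ |(-(c * E1))| + |(c/(1-t)^2) * Eb| := abs_add_le _ _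
      _ = c * E1 + (c/(1-t)^2) * Eb := by
            rw [h1, abs_of_pos (by positivity)]
      _ ≤ c * 1 + 64/c := by
            have := mul_le_mul_of_nonneg_left hE1le hc.le
            linarith
      _ = c + 64/c := by ring
    have hnum2bd : |num2| ≤ 2 := by
      rw [hnum2, abs_of_nonneg hdiff0]; linarith
    have ht2 : (1:ℝ)/4 ≤ t^2 := by nlinarith
    calc |num1 * t - num2| ≤ |num1| * |t| + |num2| := by
          calc |num1 * t - num2| ≤ |num1 * t| + |num2| := abs_sub _ _
          _ = |num1| * |t| + |num2| := by rw [abs_mul]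
    _ ≤ (c + 64/c) * 1 + 2 := by
          have habst : |t| ≤ 1 := by rw [abs_of_pos ht0]; linarith
          have h64 : 0 ≤ c + 64/c := by positivity
          nlinarith [abs_nonneg num1, hnum1bd, abs_nonneg num2]
    _ = c + 64/c + 2 := by ring
    _ ≤ (4*c^2 + 12*c + 256/c + 8) * (1/4) := by
          have h1 : (4*c^2 + 12*c + 256/c + 8) * (1/4) = c^2 + 3*c + 64/c + 2 := by ring
          rw [h1]
          nlinarith
    _ ≤ (4*c^2 + 12*c + 256/c + 8) * t^2 := by
          apply mul_le_mul_of_nonneg_left ht2 (by positivity)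

noncomputable def hfun (c t x : ℝ) : ℝ :=
  (Real.exp (-(c/(1-t)*x)) - Real.exp (-(c*x)))/x

noncomputable def hfun' (c t x : ℝ) : ℝ :=
  ((Real.exp (-(c/(1-t)*x)) * -(c/(1-t)) - Real.exp (-(c*x)) * -c) * x
    - (Real.exp (-(c/(1-t)*x)) - Real.exp (-(c*x)))) / x^2

noncomputable def psif (c t x : ℝ) : ℝ := hfun c t x + hfun' c t x - c * Real.exp (-(c*x))

lemma hasDerivAt_hfun (c t : ℝ) {x : ℝ} (hx : x ≠ 0) :
    HasDerivAt (fun y => hfun c t y) (hfun' c t x) x := by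
  have h1 : HasDerivAt (fun y : ℝ => Real.exp (-(c/(1-t)*y)))
      (Real.exp (-(c/(1-t)*x)) * -(c/(1-t))) x := by
    have : HasDerivAt (fun y : ℝ => c/(1-t)*y) (c/(1-t)) x := by
      simpa using (hasDerivAt_id x).const_mul (c/(1-t))
    exact this.neg.exp
  have h2 : HasDerivAt (fun y : ℝ => Real.exp (-(c*y))) (Real.exp (-(c*x)) * -c) x :=
    hasDerivAt_E1 x
  have := (h1.sub h2).div (hasDerivAt_id x) hx
  refine this.congr_deriv ?_
  simp only [hfun', id_eq, Pi.sub_apply]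
  ring

lemma cont_hfun' {c t u v : ℝ} (hu : 0 < u) (hv : 0 < v) :
    IntervalIntegrable (fun x => hfun' c t x) volume u v := by
  apply ContinuousOn.intervalIntegrable
  intro x hx
  have hx0 : 0 < x := by
    rcases le_total u v with h | h
    · rw [uIcc_of_le h] at hx; exact lt_of_lt_of_le hu hx.1
    · rw [uIcc_of_ge h] at hx; exact lt_of_lt_of_le hv hx.1
  apply ContinuousAt.continuousWithinAt
  have hc1 : ContinuousAt (fun y : ℝ => Real.exp (-(c/(1-t)*y))) x :=
    (Real.continuous_exp.comp (continuous_const.mul continuous_id).neg).continuousAt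
  have hc2 : ContinuousAt (fun y : ℝ => Real.exp (-(c*y))) x :=
    (Real.continuous_exp.comp (continuous_const.mul continuous_id).neg).continuousAt
  exact (((hc1.mul continuousAt_const).sub (hc2.mul continuousAt_const)).mul
    continuousAt_id |>.sub (hc1.sub hc2)).div (continuousAt_id.pow 2) (by positivity)

lemma cont_hfun {c t u v : ℝ} (hu : 0 < u) (hv : 0 < v) :
    IntervalIntegrable (fun x => hfun c t x) volume u v := by
  apply ContinuousOn.intervalIntegrable
  intro x hx
  have hx0 : 0 < x := by
    rcases le_total u v with h | h
    · rw [uIcc_of_le h] at hx; exact lt_of_lt_of_le hu hx.1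
    · rw [uIcc_of_ge h] at hx; exact lt_of_lt_of_le hv hx.1
  apply ContinuousAt.continuousWithinAt
  have hc1 : ContinuousAt (fun y : ℝ => Real.exp (-(c/(1-t)*y))) x :=
    (Real.continuous_exp.comp (continuous_const.mul continuous_id).neg).continuousAt
  have hc2 : ContinuousAt (fun y : ℝ => Real.exp (-(c*y))) x :=
    (Real.continuous_exp.comp (continuous_const.mul continuous_id).neg).continuousAt
  exact (hc1.sub hc2).div continuousAt_id hx0.ne'

lemma cont_cexp {c u v : ℝ} : IntervalIntegrable (fun x => c * Real.exp (-(c*x))) volume u v := by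
  apply Continuous.intervalIntegrable
  exact continuous_const.mul (Real.continuous_exp.comp (continuous_const.mul continuous_id).neg)

lemma FTC_h {c t : ℝ} (ht0 : 0 < t) (ht1 : t < 1) :
    ∫ x in t..1, hfun' c t x = hfun c t 1 - hfun c t t := by
  apply intervalIntegral.integral_eq_sub_of_hasDerivAt
  · intro x hx
    rw [uIcc_of_le ht1.le] at hx
    exact hasDerivAt_hfun c t (lt_of_lt_of_le ht0 hx.1).ne'
  · exact cont_hfun' ht0 one_pos

lemma FTC_cexp {c t : ℝ} :
    ∫ x in t..1, c * Real.exp (-(c*x)) = Real.exp (-(c*t)) - Real.exp (-(c*1)) := by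
  have key : ∀ x ∈ uIcc t 1, HasDerivAt (fun y => -Real.exp (-(c*y)))
      (c * Real.exp (-(c*x))) x := by
    intro x _
    have := (hasDerivAt_E1 (c := c) x).neg
    refine this.congr_deriv ?_
    ring
  have := intervalIntegral.integral_eq_sub_of_hasDerivAt key cont_cexp
  rw [this]
  ring

lemma S_repr {c t : ℝ} (hc : 0 < c) (ht : t ∈ Set.Ioo (0:ℝ) 1) :
    Dval c t + (1-t) * Dderiv c t = ∫ x in t..1, psif c t x := by
  obtain ⟨ht0, ht1⟩ := ht
  have hu : 0 < 1 - t := by linarith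
  have hsplit : (∫ x in t..1, psif c t x)
      = (∫ x in t..1, hfun c t x) + (∫ x in t..1, hfun' c t x)
        - ∫ x in t..1, c * Real.exp (-(c*x)) := by
    rw [← intervalIntegral.integral_add (cont_hfun ht0 one_pos) (cont_hfun' ht0 one_pos)]
    rw [← intervalIntegral.integral_sub
      ((cont_hfun ht0 one_pos).add (cont_hfun' ht0 one_pos)) cont_cexp]
    rfl
  rw [hsplit, FTC_h ht0 ht1, FTC_cexp]
  have hD : (∫ x in t..1, hfun c t x) = Dval c t := by
    rw [Dval, tool_D_repr hc ⟨ht0, ht1⟩]; rfl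
  rw [hD]
  -- algebra: (1-t) * Dderiv = hfun 1 - hfun t - (exp(-(c*t)) - exp(-(c*1)))
  have e1 : hfun c t 1 = Real.exp (-(c/(1-t))) - Real.exp (-c) := by
    simp only [hfun, mul_one, div_one]
  have e2 : hfun c t t = (Real.exp (-(c*t/(1-t))) - Real.exp (-(c*t)))/t := by
    simp only [hfun]
    rw [show -(c/(1-t)*t) = -(c*t/(1-t)) by ring]
  have e3 : Real.exp (-(c*1)) = Real.exp (-c) := by norm_num
  rw [e1, e2, e3, Dderiv]
  field_simp
  ring

lemma psi_eq {c t x : ℝ} (hx : x ≠ 0) :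
    psif c t x = (1-x)*(Real.exp (-(c*x)) - Real.exp (-(c/(1-t)*x)))/x^2
      + ((1-x)*c*Real.exp (-(c*x)) - (c/(1-t))*Real.exp (-(c/(1-t)*x)))/x := by
  simp only [psif, hfun, hfun']
  field_simp
  ring

lemma psi_bound_low {c t x : ℝ} (hc : 0 < c) (ht0 : 0 < t) (ht1 : t < 1)
    (hth : t ≤ 1/2) (hx : t < x) (hx1 : x ≤ 1) :
    |psif c t x| ≤ 2*(c/(1-t) - c)*(1/x) + c := by
  have hu : 0 < 1 - t := by linarith
  have hx0 : 0 < x := lt_trans ht0 hx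
  set V := c/(1-t) with hV
  set P := Real.exp (-(V*x)) with hP
  set q := Real.exp (-(c*x)) with hq
  have hVc : c ≤ V := by
    rw [hV, le_div_iff₀ hu]; nlinarith
  have hPq : P ≤ q := Real.exp_le_exp.2 (by nlinarith)
  have hq1 : q ≤ 1 := Real.exp_le_one_iff.2 (by nlinarith)
  have hP0 : 0 < P := Real.exp_pos _
  have hQPle : q - P ≤ (V - c)*x := by
    have := tool_exp_sub_exp (a := c*x) (b := V*x) (by nlinarith) (by positivity)
    nlinarith
  have hx1' : 0 ≤ 1 - x := by linarith
  have p1 : |(1-x)*(q - P)/x^2| ≤ (V-c)*(1/x) := by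
    rw [abs_div, abs_of_pos (by positivity : (0:ℝ) < x^2),
      div_le_iff₀ (by positivity : (0:ℝ) < x^2)]
    rw [abs_of_nonneg (by nlinarith : (0:ℝ) ≤ (1-x)*(q-P))]
    have : (V-c)*(1/x)*x^2 = (V-c)*x := by field_simp
    rw [this]
    nlinarith
  have p2 : |((1-x)*c*q - V*P)/x| ≤ (V-c)*(1/x) + c := by
    have hlip : |c * Real.exp (-(c*x)) - V * Real.exp (-(V*x))| ≤ V - c :=
      tool_lip hx0.le hx1 hc.le hVc
    rw [← hq, ← hP] at hlip
    have hnum : |(1-x)*c*q - V*P| ≤ (V-c) + c*x := by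
      have expand : (1-x)*c*q - V*P = (c*q - V*P) - x*(c*q) := by ring
      rw [expand]
      calc |(c*q - V*P) - x*(c*q)| ≤ |c*q - V*P| + |x*(c*q)| := abs_sub _ _
      _ ≤ (V-c) + x*(c*q) := by
            have : |x*(c*q)| = x*(c*q) := abs_of_nonneg (by positivity)
            rw [this]; linarith
      _ ≤ (V-c) + c*x := by nlinarith [mul_nonneg (mul_pos hc hx0).le (sub_nonneg.2 hq1)]
    rw [abs_div, abs_of_pos hx0, div_le_iff₀ hx0]
    have : ((V-c)*(1/x) + c)*x = (V-c) + c*x := by field_simp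
    rw [this]
    exact hnum
  have hpsi := psi_eq (c := c) (t := t) (x := x) hx0.ne'
  rw [← hV, ← hP, ← hq] at hpsi
  rw [hpsi]
  calc |(1-x)*(q - P)/x^2 + ((1-x)*c*q - V*P)/x|
      ≤ |(1-x)*(q - P)/x^2| + |((1-x)*c*q - V*P)/x| := abs_add_le _ _
  _ ≤ (V-c)*(1/x) + ((V-c)*(1/x) + c) := by linarith
  _ = 2*(V - c)*(1/x) + c := by ring

lemma psi_bound_high {c t x : ℝ} (hc : 0 < c) (ht0 : 0 < t) (ht1 : t < 1)
    (hth : 1/2 ≤ t) (hx : t < x) (hx1 : x ≤ 1) :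
    |psif c t x| ≤ (4 + 2*c + 128/c)*(1-t) := by
  have hu : 0 < 1 - t := by linarith
  have hx0 : 0 < x := lt_trans ht0 hx
  have hxh : 1/2 ≤ x := le_trans hth hx.le
  set V := c/(1-t) with hV
  set P := Real.exp (-(V*x)) with hP
  set q := Real.exp (-(c*x)) with hq
  have hV0 : 0 < V := by positivity
  have hVc : c ≤ V := by
    rw [hV, le_div_iff₀ hu]; nlinarith
  have hPq : P ≤ q := Real.exp_le_exp.2 (by nlinarith)
  have hq1 : q ≤ 1 := Real.exp_le_one_iff.2 (by nlinarith)
  have hP0 : 0 < P := Real.exp_pos _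
  have hxt : 1 - x ≤ 1 - t := by linarith
  have hx1' : 0 ≤ 1 - x := by linarith
  have hinvx : 1/x ≤ 2 := by
    rw [div_le_iff₀ hx0]; linarith
  have hinvx2 : 1/x^2 ≤ 4 := by
    rw [div_le_iff₀ (by positivity : (0:ℝ) < x^2)]; nlinarith
  -- V*P ≤ 64*(1-t)/c
  have hVP : V*P ≤ 64*(1-t)/c := by
    have hPle : P ≤ Real.exp (-(1/2*V)) := by
      rw [hP]; apply Real.exp_le_exp.2; nlinarith
    have hsq := tool_sq_decay (a := 1/2) (y := V) (by norm_num) hV0.le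
    have h64 : 16/(1/2:ℝ)^2 = 64 := by norm_num
    rw [h64] at hsq
    have h2 : V * Real.exp (-(1/2*V)) ≤ 64/V := by
      rw [le_div_iff₀ hV0]
      nlinarith [hsq]
    have h3 : (64:ℝ)/V = 64*(1-t)/c := by
      rw [hV]; field_simp
    calc V*P ≤ V * Real.exp (-(1/2*V)) := mul_le_mul_of_nonneg_left hPle hV0.le
    _ ≤ 64/V := h2
    _ = 64*(1-t)/c := h3
  have hVP0 : 0 ≤ V*P := by positivity
  have p1 : |(1-x)*(q - P)/x^2| ≤ 4*(1-t) := by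
    rw [abs_div, abs_of_pos (by positivity : (0:ℝ) < x^2),
      div_le_iff₀ (by positivity : (0:ℝ) < x^2)]
    rw [abs_of_nonneg (mul_nonneg hx1' (sub_nonneg.2 hPq))]
    have hxx : (1:ℝ)/4 ≤ x^2 := by nlinarith
    nlinarith [hP0.le]
  have p2 : |((1-x)*c*q - V*P)/x| ≤ 2*((1-t)*c + 64*(1-t)/c) := by
    have hnum : |(1-x)*c*q - V*P| ≤ (1-t)*c + 64*(1-t)/c := by
      have hA : (1-x)*c*q ≤ (1-t)*c := by
        have h1 : (1-x)*c*q ≤ (1-x)*c := by nlinarith [mul_nonneg hx1' hc.le]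
        have h2 : (1-x)*c ≤ (1-t)*c := by nlinarith
        linarith
      have hA0 : 0 ≤ (1-x)*c*q := by positivity
      rw [abs_le]
      constructor
      · have : 0 ≤ 64*(1-t)/c := by positivity
        nlinarith
      · nlinarith
    rw [abs_div, abs_of_pos hx0]
    rw [div_le_iff₀ hx0]
    have hR : 0 ≤ (1-t)*c + 64*(1-t)/c := by positivity
    nlinarith [hnum, abs_nonneg ((1-x)*c*q - V*P)]
  have hpsi := psi_eq (c := c) (t := t) (x := x) hx0.ne'
  rw [← hV, ← hP, ← hq] at hpsi
  rw [hpsi]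
  calc |(1-x)*(q - P)/x^2 + ((1-x)*c*q - V*P)/x|
      ≤ |(1-x)*(q - P)/x^2| + |((1-x)*c*q - V*P)/x| := abs_add_le _ _
  _ ≤ 4*(1-t) + 2*((1-t)*c + 64*(1-t)/c) := by linarith
  _ = (4 + 2*c + 128/c)*(1-t) := by field_simp; ring

lemma boundC {c t : ℝ} (hc : 0 < c) (ht : t ∈ Set.Ioo (0:ℝ) 1) :
    |Cderiv c t| ≤ 22*c^2 + 4*c + 128 := by
  obtain ⟨ht0, ht1⟩ := ht
  have hu : 0 < 1 - t := by linarith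
  have hCd : Cderiv c t = (c/(1-t)^2) * (Dval c t + (1-t) * Dderiv c t) := by
    rw [Cderiv]; field_simp
  rw [hCd, S_repr hc ⟨ht0, ht1⟩]
  rw [abs_mul, abs_of_pos (by positivity : (0:ℝ) < c/(1-t)^2)]
  have hIoc : Set.uIoc t 1 = Set.Ioc t 1 := Set.uIoc_of_le ht1.le
  rcases le_total t (1/2) with hth | hth
  · -- low case
    have hu2 : (1:ℝ)/2 ≤ 1 - t := by linarith
    set A := c/(1-t) - c with hA
    have hA0 : 0 ≤ A := by
      rw [hA, sub_nonneg, le_div_iff₀ hu]; nlinarith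
    have hA2 : A ≤ 2*c*t := by
      rw [hA, sub_le_iff_le_add, div_le_iff₀ hu]
      nlinarith [mul_nonneg (mul_pos hc ht0).le (by linarith : (0:ℝ) ≤ 1 - 2*t)]
    have hgint : IntervalIntegrable (fun x => 2*A*(1/x) + c) volume t 1 := by
      apply ContinuousOn.intervalIntegrable
      intro x hx
      rw [uIcc_of_le ht1.le] at hx
      have hx0 : 0 < x := lt_of_lt_of_le ht0 hx.1
      exact ((continuousAt_const.mul ((continuousAt_const.div continuousAt_id
        hx0.ne'))).add continuousAt_const).continuousWithinAt
    have hb : ‖∫ x in t..1, psif c t x‖ ≤ |∫ x in t..1, 2*A*(1/x) + c| := by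
      apply intervalIntegral.norm_integral_le_abs_of_norm_le _ hgint
      rw [ae_restrict_iff' measurableSet_uIoc]
      apply Filter.Eventually.of_forall
      intro x hx
      rw [hIoc] at hx
      rw [Real.norm_eq_abs]
      have := psi_bound_low hc ht0 ht1 hth hx.1 hx.2
      calc |psif c t x| ≤ 2*(c/(1-t) - c)*(1/x) + c := this
      _ = 2*A*(1/x) + c := by rw [hA]
    have hint1 : IntervalIntegrable (fun x : ℝ => 2*A*(1/x)) volume t 1 := by
      apply ContinuousOn.intervalIntegrable
      intro x hx
      rw [uIcc_of_le ht1.le] at hx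
      have hx0 : 0 < x := lt_of_lt_of_le ht0 hx.1
      exact (continuousAt_const.mul ((continuousAt_const.div continuousAt_id
        hx0.ne'))).continuousWithinAt
    have hval : (∫ x in t..1, 2*A*(1/x) + c) = 2*A*Real.log (1/t) + (1-t)*c := by
      rw [intervalIntegral.integral_add hint1 intervalIntegrable_const]
      rw [intervalIntegral.integral_const_mul]
      rw [integral_one_div (by
        rw [uIcc_of_le ht1.le]
        intro h0
        exact absurd h0.1 (by linarith) : (0:ℝ) ∉ uIcc t 1)]
      rw [intervalIntegral.integral_const]
      rw [smul_eq_mul]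
    have hlog0 : 0 ≤ Real.log (1/t) := Real.log_nonneg (by
      rw [le_div_iff₀ ht0]; linarith)
    have hlog : Real.log (1/t) ≤ 1/t := by
      have := Real.log_le_sub_one_of_pos (show (0:ℝ) < 1/t by positivity)
      linarith
    have h2A : A * Real.log (1/t) ≤ 2*c := by
      have hm : A * Real.log (1/t) ≤ (2*c*t) * (1/t) :=
        mul_le_mul hA2 hlog hlog0 (by positivity)
      have ht' : (2*c*t)*(1/t) = 2*c := by field_simp
      rw [ht'] at hm
      linarith
    have habs : |∫ x in t..1, 2*A*(1/x) + c| ≤ 5*c := by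
      rw [hval, abs_of_nonneg (by nlinarith [mul_nonneg hA0 hlog0, mul_nonneg hu.le hc.le])]
      nlinarith [mul_nonneg hu.le hc.le]
    have hS5 : |∫ x in t..1, psif c t x| ≤ 5*c := by
      rw [← Real.norm_eq_abs]
      exact hb.trans habs
    have hcu : c/(1-t)^2 ≤ 4*c := by
      rw [div_le_iff₀ (by positivity)]
      nlinarith [mul_nonneg (mul_nonneg hc.le (by linarith : (0:ℝ) ≤ 2*(1-t)-1))
        (by linarith : (0:ℝ) ≤ 2*(1-t)+1)]
    calc (c/(1-t)^2) * |∫ x in t..1, psif c t x| ≤ (4*c)*(5*c) :=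
          mul_le_mul hcu hS5 (abs_nonneg _) (by positivity)
    _ = 20*c^2 := by ring
    _ ≤ 22*c^2 + 4*c + 128 := by nlinarith
  · -- high case
    have hK : ∀ x ∈ Set.uIoc t 1, ‖psif c t x‖ ≤ (4+2*c+128/c)*(1-t) := by
      intro x hx
      rw [hIoc] at hx
      rw [Real.norm_eq_abs]
      exact psi_bound_high hc ht0 ht1 hth hx.1 hx.2
    have hb := intervalIntegral.norm_integral_le_of_norm_le_const hK
    rw [abs_of_pos hu] at hb
    have hS : |∫ x in t..1, psif c t x| ≤ (4+2*c+128/c)*(1-t)*(1-t) := by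
      rw [← Real.norm_eq_abs]
      exact hb
    have heq : (c/(1-t)^2) * ((4+2*c+128/c)*(1-t)*(1-t)) = 4*c + 2*c^2 + 128 := by
      field_simp
    calc (c/(1-t)^2) * |∫ x in t..1, psif c t x|
        ≤ (c/(1-t)^2) * ((4+2*c+128/c)*(1-t)*(1-t)) := by
          apply mul_le_mul_of_nonneg_left hS (by positivity)
    _ = 4*c + 2*c^2 + 128 := heq
    _ ≤ 22*c^2 + 4*c + 128 := by nlinarith

lemma Wbound {c t : ℝ} (hc : 0 < c) (ht : t ∈ Set.Ioo (0:ℝ) 1) :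
    |Wderiv c t| ≤ 27*c^2 + 16*c + 256/c + 137 := by
  have hA := boundA hc ht
  have hB := boundB hc ht
  have hC := boundC hc ht
  have h1 : |Wderiv c t| ≤ |Aderiv c t| + |Bderiv c t| + |Cderiv c t| := by
    rw [Wderiv]
    calc |Aderiv c t + Bderiv c t + Cderiv c t|
        ≤ |Aderiv c t + Bderiv c t| + |Cderiv c t| := abs_add_le _ _
    _ ≤ |Aderiv c t| + |Bderiv c t| + |Cderiv c t| := by
          linarith [abs_add_le (Aderiv c t) (Bderiv c t)]
  nlinarith [sq_nonneg c]

/-- `w` is Lipschitz on `(0,1)`, and consequently extends to a continuous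
function on `[0,1]`. -/
theorem stmt_11 (c : ℝ) (hc : 0 < c)
    (hceq : (∫ x in (0:ℝ)..c, (Real.exp x - 1) / x) = 1) :
    (∃ L : ℝ, 0 < L ∧ ∀ s ∈ Set.Ioo (0:ℝ) 1, ∀ t ∈ Set.Ioo (0:ℝ) 1,
      |winRate c s - winRate c t| ≤ L * |s - t|) ∧
    ∃ g : ℝ → ℝ, ContinuousOn g (Set.Icc 0 1) ∧
      ∀ t ∈ Set.Ioo (0:ℝ) 1, g t = winRate c t := by
  set L : ℝ := 27*c^2 + 16*c + 256/c + 137 with hLdef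
  have hL : 0 < L := by positivity
  have hder : ∀ x ∈ Set.Ioo (0:ℝ) 1,
      HasDerivWithinAt (winRate c) (Wderiv c x) (Set.Ioo (0:ℝ) 1) x :=
    fun x hx => (hasDerivAt_winRate hc hx).hasDerivWithinAt
  have hbd : ∀ x ∈ Set.Ioo (0:ℝ) 1, ‖Wderiv c x‖ ≤ L := by
    intro x hx
    rw [Real.norm_eq_abs]
    exact Wbound hc hx
  have hlip : ∀ s ∈ Set.Ioo (0:ℝ) 1, ∀ t ∈ Set.Ioo (0:ℝ) 1,
      |winRate c s - winRate c t| ≤ L * |s - t| := by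
    intro s hs t ht
    have := Convex.norm_image_sub_le_of_norm_hasDerivWithin_le hder hbd
      (convex_Ioo (0:ℝ) 1) ht hs
    rw [Real.norm_eq_abs, Real.norm_eq_abs] at this
    exact this
  refine ⟨⟨L, hL, hlip⟩, ?_⟩
  have hlipOn : LipschitzOnWith (Real.toNNReal L) (winRate c) (Set.Ioo (0:ℝ) 1) := by
    rw [lipschitzOnWith_iff_dist_le_mul]
    intro x hx y hy
    rw [Real.dist_eq, Real.dist_eq]
    have hcoe : ((Real.toNNReal L) : ℝ) = L := Real.coe_toNNReal L hL.le
    rw [hcoe]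
    exact hlip x hx y hy
  obtain ⟨g, hgLip, hEq⟩ := hlipOn.extend_real
  exact ⟨g, hgLip.continuous.continuousOn, fun t ht => (hEq ht).symm⟩
end
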